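/- arXiv:1310.7332 — 4 statements merged into one kernel-verified Lean document; each statement's English description precedes it below -/
import Mathlib

section
/- Assume λ₂c₁ - λ₁c₂ < 0, and define I_D(x) = |(λ₁+λ₂)x - (λ₂c₁-λ₁c₂)|/(c₁+c₂) for x ∈ [-c₂, c₁] and I_D(x) = ∞ otherwise. Then inf{x · I_D(1/x) : x > 0} = λ₁/c₁, and the infimum is attained at x = 1/c₁. -/
/-!
For `x > 0`, `x * I_D(1/x)` is `⊤` unless `1/x ≤ c1`, and otherwise equals
`|(l1 + l2) - (l2 c1 - l1 c2) x| / (c1 + c2)`. As `l2 c1 - l1 c2 < 0`, the expression inside the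
absolute value increases in `x`, so on `x ≥ 1/c1` it is smallest at `x = 1/c1`, where it equals
`l1 (c1 + c2) / c1`.
-/

open ENNReal

noncomputable def ID (l1 l2 c1 c2 : ℝ) (x : ℝ) : ℝ≥0∞ :=
  if x ∈ Set.Icc (-c2) c1 then
    ENNReal.ofReal (|(l1 + l2) * x - (l2 * c1 - l1 * c2)| / (c1 + c2))
  else ⊤

theorem ID_self {l1 l2 c1 c2 : ℝ} (hc : 0 < c1 + c2) :
    ID l1 l2 c1 c2 c1 = ENNReal.ofReal |l1| := by
  have hmem : c1 ∈ Set.Icc (-c2) c1 := ⟨by linarith, le_rfl⟩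
  rw [ID, if_pos hmem]
  congr 1
  rw [show (l1 + l2) * c1 - (l2 * c1 - l1 * c2) = l1 * (c1 + c2) by ring, abs_mul,
    abs_of_pos hc, mul_div_cancel_right₀ _ hc.ne']

theorem div_le_mul_abs_div {l1 l2 c1 c2 x : ℝ} (hc1 : 0 < c1) (hc : 0 < c1 + c2)
    (hstab : l2 * c1 - l1 * c2 < 0) (hx : 0 < x) (hxc : 1 / x ≤ c1) :
    l1 / c1 ≤ x * (|(l1 + l2) * (1 / x) - (l2 * c1 - l1 * c2)| / (c1 + c2)) := by
  have hcx : 1 / c1 ≤ x := by rwa [one_div_le hc1 hx]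
  calc l1 / c1 = ((l1 + l2) - (l2 * c1 - l1 * c2) * (1 / c1)) / (c1 + c2) := by
        field_simp; ring
    _ ≤ ((l1 + l2) - (l2 * c1 - l1 * c2) * x) / (c1 + c2) :=
        div_le_div_of_nonneg_right
          (sub_le_sub_left (mul_le_mul_of_nonpos_left hcx hstab.le) _) hc.le
    _ ≤ |(l1 + l2) - (l2 * c1 - l1 * c2) * x| / (c1 + c2) := by gcongr; exact le_abs_self _
    _ = x * (|(l1 + l2) * (1 / x) - (l2 * c1 - l1 * c2)| / (c1 + c2)) := by
        rw [← mul_div_assoc, ← abs_of_pos hx, ← abs_mul, abs_of_pos hx]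
        congr 2
        field_simp

theorem ofReal_div_le_ofReal_mul_ID_one_div {l1 l2 c1 c2 x : ℝ} (hc1 : 0 < c1)
    (hc : 0 < c1 + c2) (hstab : l2 * c1 - l1 * c2 < 0) (hx : 0 < x) :
    ENNReal.ofReal (l1 / c1) ≤ ENNReal.ofReal x * ID l1 l2 c1 c2 (1 / x) := by
  by_cases hmem : 1 / x ∈ Set.Icc (-c2) c1
  · rw [ID, if_pos hmem, ← ENNReal.ofReal_mul hx.le]
    exact ENNReal.ofReal_le_ofReal (div_le_mul_abs_div hc1 hc hstab hx hmem.2)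
  · rw [ID, if_neg hmem, ENNReal.mul_top (by simpa using hx)]
    exact le_top

theorem damped_telegraph_lundberg_exponent_general
    (l1 l2 c1 c2 : ℝ) (hl1 : 0 < l1) (hc1 : 0 < c1) (hc2 : 0 < c2)
    (hstab : l2 * c1 - l1 * c2 < 0) :
    sInf {z : ℝ≥0∞ | ∃ x : ℝ, 0 < x ∧ z = ENNReal.ofReal x * ID l1 l2 c1 c2 (1 / x)} =
        ENNReal.ofReal (l1 / c1) ∧
      ENNReal.ofReal (1 / c1) * ID l1 l2 c1 c2 (1 / (1 / c1)) = ENNReal.ofReal (l1 / c1) := by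
  have hc : 0 < c1 + c2 := by linarith
  have hattained : ENNReal.ofReal (1 / c1) * ID l1 l2 c1 c2 (1 / (1 / c1)) =
      ENNReal.ofReal (l1 / c1) := by
    rw [one_div_one_div, ID_self hc, abs_of_pos hl1, ← ENNReal.ofReal_mul (by positivity),
      one_div_mul_eq_div]
  have hleast : IsLeast
      {z : ℝ≥0∞ | ∃ x : ℝ, 0 < x ∧ z = ENNReal.ofReal x * ID l1 l2 c1 c2 (1 / x)}
      (ENNReal.ofReal (l1 / c1)) := by
    refine ⟨⟨1 / c1, by positivity, hattained.symm⟩, ?_⟩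
    rintro _ ⟨x, hx, rfl⟩
    exact ofReal_div_le_ofReal_mul_ID_one_div hc1 hc hstab hx
  exact ⟨hleast.isGLB.sInf_eq, hattained⟩

theorem damped_telegraph_lundberg_exponent
    (l1 l2 c1 c2 : ℝ) (hl1 : 0 < l1) (hl2 : 0 < l2) (hc1 : 0 < c1) (hc2 : 0 < c2)
    (hstab : l2 * c1 - l1 * c2 < 0) :
    sInf {z : ℝ≥0∞ | ∃ x : ℝ, 0 < x ∧ z = ENNReal.ofReal x * ID l1 l2 c1 c2 (1 / x)} =
        ENNReal.ofReal (l1 / c1) ∧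
      ENNReal.ofReal (1 / c1) * ID l1 l2 c1 c2 (1 / (1 / c1)) = ENNReal.ofReal (l1 / c1) :=
  damped_telegraph_lundberg_exponent_general l1 l2 c1 c2 hl1 hc1 hc2 hstab
end

section
/- Define I_D(x) = |(λ₁+λ₂)x - (λ₂c₁-λ₁c₂)|/(c₁+c₂) and I_S(x) = (√(λ₁(x+c₂)/(c₁+c₂)) − √(λ₂(c₁−x)/(c₁+c₂)))² for x ∈ [-c₂, c₁]. Then I_D(x) ≥ I_S(x) for all x ∈ [-c₂, c₁], with strict inequality for every x ∈ (-c₂, c₁) with x ≠ (λ₂c₁-λ₁c₂)/(λ₁+λ₂). -/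
/-!
Write `p = λ₁(x + c₂)/(c₁ + c₂)` and `q = λ₂(c₁ - x)/(c₁ + c₂)`; these are nonnegative on
`[-c₂, c₁]`, and `I_D(x) = |p - q|` while `I_S(x) = (√p - √q)²`. For `u, v ≥ 0` one has
`(u - v)² = |u - v|·|u - v| ≤ |u - v|·(u + v) = |u² - v²|`, strictly when `u, v > 0` and `u ≠ v`.
On the open interval `p, q > 0`, and `p = q` exactly at `x = (λ₂c₁ - λ₁c₂)/(λ₁ + λ₂)`.
-/

open Real

theorem sq_sub_le_abs_sq_sub_sq {u v : ℝ} (hu : 0 ≤ u) (hv : 0 ≤ v) :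
    (u - v) ^ 2 ≤ |u ^ 2 - v ^ 2| := by
  calc (u - v) ^ 2 = |u - v| * |u - v| := by rw [abs_mul_abs_self, sq]
    _ ≤ |u - v| * (u + v) := by
      gcongr
      exact abs_sub_le_iff.mpr ⟨by linarith, by linarith⟩
    _ = |u ^ 2 - v ^ 2| := by rw [sq_sub_sq, abs_mul, abs_of_nonneg (add_nonneg hu hv), mul_comm]

theorem sq_sub_lt_abs_sq_sub_sq {u v : ℝ} (hu : 0 < u) (hv : 0 < v) (huv : u ≠ v) :
    (u - v) ^ 2 < |u ^ 2 - v ^ 2| := by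
  calc (u - v) ^ 2 = |u - v| * |u - v| := by rw [abs_mul_abs_self, sq]
    _ < |u - v| * (u + v) := by
      have hpos : 0 < |u - v| := abs_pos.mpr (sub_ne_zero.mpr huv)
      gcongr
      exact abs_sub_lt_iff.mpr ⟨by linarith, by linarith⟩
    _ = |u ^ 2 - v ^ 2| := by rw [sq_sub_sq, abs_mul, abs_of_pos (add_pos hu hv), mul_comm]

theorem sq_sqrt_sub_sqrt_le_abs_sub {a b : ℝ} (ha : 0 ≤ a) (hb : 0 ≤ b) :
    (√a - √b) ^ 2 ≤ |a - b| := by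
  simpa only [sq_sqrt ha, sq_sqrt hb] using sq_sub_le_abs_sq_sub_sq (sqrt_nonneg a) (sqrt_nonneg b)

theorem sq_sqrt_sub_sqrt_lt_abs_sub {a b : ℝ} (ha : 0 < a) (hb : 0 < b) (hab : a ≠ b) :
    (√a - √b) ^ 2 < |a - b| := by
  simpa only [sq_sqrt ha.le, sq_sqrt hb.le] using
    sq_sub_lt_abs_sq_sub_sq (sqrt_pos.mpr ha) (sqrt_pos.mpr hb)
      ((sqrt_inj ha.le hb.le).not.mpr hab)

theorem damped_rate_eq_abs_sub_div {l1 l2 c1 c2 : ℝ} (x : ℝ) (hc : 0 ≤ c1 + c2) :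
    |(l1 + l2) * x - (l2 * c1 - l1 * c2)| / (c1 + c2) =
      |l1 * (x + c2) / (c1 + c2) - l2 * (c1 - x) / (c1 + c2)| := by
  rw [div_sub_div_same, abs_div, abs_of_nonneg hc]
  ring_nf

theorem damped_dominates_standard_rate_general
    (l1 l2 c1 c2 : ℝ) (hl1 : 0 < l1) (hl2 : 0 < l2) :
    (∀ x ∈ Set.Icc (-c2) c1,
      (Real.sqrt (l1 * (x + c2) / (c1 + c2)) - Real.sqrt (l2 * (c1 - x) / (c1 + c2))) ^ 2 ≤
        |(l1 + l2) * x - (l2 * c1 - l1 * c2)| / (c1 + c2)) ∧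
      ∀ x ∈ Set.Ioo (-c2) c1, x ≠ (l2 * c1 - l1 * c2) / (l1 + l2) →
        (Real.sqrt (l1 * (x + c2) / (c1 + c2)) - Real.sqrt (l2 * (c1 - x) / (c1 + c2))) ^ 2 <
          |(l1 + l2) * x - (l2 * c1 - l1 * c2)| / (c1 + c2) := by
  refine ⟨fun x ⟨hx2, hx1⟩ => ?_, fun x ⟨hx2, hx1⟩ hx => ?_⟩
  · have hc : 0 ≤ c1 + c2 := by linarith
    rw [damped_rate_eq_abs_sub_div x hc]
    exact sq_sqrt_sub_sqrt_le_abs_sub (div_nonneg (mul_nonneg hl1.le (by linarith)) hc)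
      (div_nonneg (mul_nonneg hl2.le (by linarith)) hc)
  · have hc : 0 < c1 + c2 := by linarith
    rw [damped_rate_eq_abs_sub_div x hc.le]
    refine sq_sqrt_sub_sqrt_lt_abs_sub (div_pos (mul_pos hl1 (by linarith)) hc)
      (div_pos (mul_pos hl2 (by linarith)) hc) fun h => hx ?_
    rw [div_left_inj' hc.ne'] at h
    rw [eq_div_iff (by positivity)]
    linarith

theorem damped_dominates_standard_rate
    (l1 l2 c1 c2 : ℝ) (hl1 : 0 < l1) (hl2 : 0 < l2) (hc1 : 0 < c1) (hc2 : 0 < c2) :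
    (∀ x ∈ Set.Icc (-c2) c1,
      (Real.sqrt (l1 * (x + c2) / (c1 + c2)) - Real.sqrt (l2 * (c1 - x) / (c1 + c2))) ^ 2 ≤
        |(l1 + l2) * x - (l2 * c1 - l1 * c2)| / (c1 + c2)) ∧
      ∀ x ∈ Set.Ioo (-c2) c1, x ≠ (l2 * c1 - l1 * c2) / (l1 + l2) →
        (Real.sqrt (l1 * (x + c2) / (c1 + c2)) - Real.sqrt (l2 * (c1 - x) / (c1 + c2))) ^ 2 <
          |(l1 + l2) * x - (l2 * c1 - l1 * c2)| / (c1 + c2) :=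
  damped_dominates_standard_rate_general l1 l2 c1 c2 hl1 hl2
end

section
/- Assume λ₂c₁ - λ₁c₂ < 0, and define I_S(x) = (√(λ₁(x+c₂)/(c₁+c₂)) − √(λ₂(c₁−x)/(c₁+c₂)))² for x ∈ [-c₂, c₁] and I_S(x) = ∞ otherwise. Then inf{x · I_S(1/x) : x > 0} = (λ₁c₂ - λ₂c₁)/(c₁c₂). -/
open ENNReal

noncomputable def IS (l1 l2 c1 c2 : ℝ) (x : ℝ) : ℝ≥0∞ :=
  if x ∈ Set.Icc (-c2) c1 then
    ENNReal.ofReal ((Real.sqrt (l1 * (x + c2) / (c1 + c2)) -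
      Real.sqrt (l2 * (c1 - x) / (c1 + c2))) ^ 2)
  else ⊤

/-!
For `1 / x ≤ c₁`, `x * I_S (1 / x) = (√p - √q) ^ 2` with `p = λ₁ (1 + c₂ x) / (c₁ + c₂)` and
`q = λ₂ (c₁ x - 1) / (c₁ + c₂)` affine in `x`; for `1 / x > c₁` it is `∞`. For every `t > 0`, AM-GM gives
`(√p - √q) ^ 2 ≥ (1 - t) p + (1 - t⁻¹) q`, with equality when `q = t ^ 2 p`. The choice
`t = λ₂ c₁ / (λ₁ c₂)` kills the `x`-dependence of the right-hand side, leaving the constant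
`(λ₁ c₂ - λ₂ c₁) / (c₁ c₂)`, and the equality case is met at a single admissible `x`.
-/

theorem affine_le_sq_sqrt_sub_sqrt {p q t : ℝ} (hp : 0 ≤ p) (hq : 0 ≤ q) (ht : 0 < t) :
    (1 - t) * p + (1 - t⁻¹) * q ≤ (√p - √q) ^ 2 := by
  have key : t * ((√p - √q) ^ 2 - ((1 - t) * p + (1 - t⁻¹) * q)) = (t * √p - √q) ^ 2 := by
    linear_combination (t - t ^ 2) * Real.sq_sqrt hp + (t - 1) * Real.sq_sqrt hq +
      q * mul_inv_cancel₀ ht.ne'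
  have := nonneg_of_mul_nonneg_right (key ▸ sq_nonneg _) ht
  linarith

theorem sq_sqrt_sub_sqrt_sq_mul_eq_affine {p t : ℝ} (hp : 0 ≤ p) (ht : 0 ≤ t) :
    (√p - √(t ^ 2 * p)) ^ 2 = (1 - t) * p + (1 - t⁻¹) * (t ^ 2 * p) := by
  rcases ht.eq_or_lt with rfl | ht
  · simp [Real.sq_sqrt hp]
  rw [Real.sqrt_mul' _ hp, Real.sqrt_sq ht.le]
  field_simp
  rw [Real.sq_sqrt hp]
  ring

theorem mul_sq_sqrt_sub_sqrt {x : ℝ} (hx : 0 ≤ x) (a b : ℝ) :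
    x * (√a - √b) ^ 2 = (√(x * a) - √(x * b)) ^ 2 := by
  rw [Real.sqrt_mul hx, Real.sqrt_mul hx]
  nth_rw 1 [← Real.sq_sqrt hx]
  ring

/-- The point where the equality case `q = t ^ 2 * p` of `affine_le_sq_sqrt_sub_sqrt` holds. -/
noncomputable def lundbergMinimizer (l1 l2 c1 c2 : ℝ) : ℝ :=
  (l1 * c2 ^ 2 + l2 * c1 ^ 2) / (c1 * c2 * (l1 * c2 - l2 * c1))

section Telegraph

variable {l1 l2 c1 c2 x : ℝ}

theorem ofReal_mul_IS_one_div_of_le (hx : 0 < x) (hc2 : 0 ≤ c2) (h : 1 / x ≤ c1) :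
    ENNReal.ofReal x * IS l1 l2 c1 c2 (1 / x) =
      ENNReal.ofReal ((√(x * (l1 * (1 / x + c2) / (c1 + c2))) -
        √(x * (l2 * (c1 - 1 / x) / (c1 + c2)))) ^ 2) := by
  have hmem : 1 / x ∈ Set.Icc (-c2) c1 := ⟨by linarith [one_div_pos.2 hx], h⟩
  rw [IS, if_pos hmem, ← ofReal_mul hx.le, mul_sq_sqrt_sub_sqrt hx.le]

theorem ofReal_mul_IS_one_div_of_lt (hx : 0 < x) (h : c1 < 1 / x) :
    ENNReal.ofReal x * IS l1 l2 c1 c2 (1 / x) = ⊤ := by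
  rw [IS, if_neg fun hmem => h.not_ge hmem.2, mul_top (by simpa using hx)]

theorem telegraph_affine_combination_eq (hl1 : l1 ≠ 0) (hl2 : l2 ≠ 0) (hc1 : c1 ≠ 0)
    (hc2 : c2 ≠ 0) (hc : c1 + c2 ≠ 0) (hx : x ≠ 0) :
    (1 - l2 * c1 / (l1 * c2)) * (x * (l1 * (1 / x + c2) / (c1 + c2))) +
        (1 - (l2 * c1 / (l1 * c2))⁻¹) * (x * (l2 * (c1 - 1 / x) / (c1 + c2))) =
      (l1 * c2 - l2 * c1) / (c1 * c2) := by
  field_simp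
  ring

theorem lundbergMinimizer_pos (hl1 : 0 < l1) (hl2 : 0 < l2) (hc1 : 0 < c1) (hc2 : 0 < c2)
    (hD : l2 * c1 < l1 * c2) : 0 < lundbergMinimizer l1 l2 c1 c2 :=
  div_pos (by positivity) (mul_pos (by positivity) (by linarith))

theorem one_div_lundbergMinimizer_le (hl1 : 0 < l1) (hl2 : 0 < l2) (hc1 : 0 < c1)
    (hc2 : 0 < c2) (hD : l2 * c1 < l1 * c2) : 1 / lundbergMinimizer l1 l2 c1 c2 ≤ c1 := by
  have : 0 < l1 * c2 - l2 * c1 := by linarith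
  rw [lundbergMinimizer, one_div_div, div_le_iff₀ (by positivity)]
  nlinarith [mul_pos (mul_pos hl2 hc1) (mul_pos hc1 hc1)]

theorem lundbergMinimizer_mul_eq (hl1 : 0 < l1) (hl2 : 0 < l2) (hc1 : 0 < c1) (hc2 : 0 < c2)
    (hD : l2 * c1 < l1 * c2) (hx : x = lundbergMinimizer l1 l2 c1 c2) :
    x * (l2 * (c1 - 1 / x) / (c1 + c2)) =
      (l2 * c1 / (l1 * c2)) ^ 2 * (x * (l1 * (1 / x + c2) / (c1 + c2))) := by
  have : l1 * c2 - l2 * c1 ≠ 0 := by linarith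
  subst hx
  rw [lundbergMinimizer]
  field_simp
  ring

end Telegraph

theorem standard_telegraph_lundberg_exponent
    (l1 l2 c1 c2 : ℝ) (hl1 : 0 < l1) (hl2 : 0 < l2) (hc1 : 0 < c1) (hc2 : 0 < c2)
    (hstab : l2 * c1 - l1 * c2 < 0) :
    sInf {z : ℝ≥0∞ | ∃ x : ℝ, 0 < x ∧ z = ENNReal.ofReal x * IS l1 l2 c1 c2 (1 / x)} =
      ENNReal.ofReal ((l1 * c2 - l2 * c1) / (c1 * c2)) := by
  have ht : 0 < l2 * c1 / (l1 * c2) := by positivity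
  have hD : l2 * c1 < l1 * c2 := by linarith
  apply le_antisymm
  · have hx₀ := lundbergMinimizer_pos hl1 hl2 hc1 hc2 hD
    refine sInf_le ⟨_, hx₀, ?_⟩
    rw [ofReal_mul_IS_one_div_of_le hx₀ hc2.le (one_div_lundbergMinimizer_le hl1 hl2 hc1 hc2 hD),
      ← telegraph_affine_combination_eq hl1.ne' hl2.ne' hc1.ne' hc2.ne' (by positivity) hx₀.ne',
      lundbergMinimizer_mul_eq hl1 hl2 hc1 hc2 hD rfl, sq_sqrt_sub_sqrt_sq_mul_eq_affine _ ht.le]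
    positivity
  · refine le_sInf ?_
    rintro _ ⟨x, hx, rfl⟩
    rcases le_or_gt (1 / x) c1 with h | h
    · rw [ofReal_mul_IS_one_div_of_le hx hc2.le h,
        ← telegraph_affine_combination_eq hl1.ne' hl2.ne' hc1.ne' hc2.ne' (by positivity) hx.ne']
      refine ofReal_le_ofReal (affine_le_sq_sqrt_sub_sqrt (by positivity) ?_ ht)
      have : 0 ≤ c1 - 1 / x := by linarith
      positivity
    · rw [ofReal_mul_IS_one_div_of_lt hx h]
      exact le_top
end

section
/- Let α ∈ [0,1], λ₁, λ₂, c₁, c₂ > 0, t > 0, and for x ∈ (−c₂t, c₁t) set τ* = (c₂t + x)/(c₁+c₂) and p(x,t) = e^{−λ₁τ*} e^{−λ₂(t−τ*)} [λ₁+λ₂ − αλ₂ e^{−λ₁τ*} − (1−α)λ₁ e^{−λ₂(t−τ*)}] / ((c₁+c₂)[e^{−λ₂(t−τ*)} + e^{−λ₁τ*}(1 − e^{−λ₂(t−τ*)})]²). Then p(x,t) > 0 for all x ∈ (−c₂t, c₁t), and αe^{−λ₁t} + (1−α)e^{−λ₂t} + ∫_{−c₂t}^{c₁t} p(x,t) dx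 = 1. -/
/-!
Write `x = c₁τ - c₂(t - τ)`, where `τ ∈ [0, t]` is the time spent moving at speed `c₁`. Then
`p(x, t) = q(τ) / (c₁ + c₂)`, where `q` is a rational function of `u = e^{-λ₁τ}` and
`v = e^{-λ₂(t-τ)}`, both in `(0, 1]`. The numerator of `q` is at least `αλ₁ + (1 - α)λ₂ > 0`, and
`q` has the explicit primitive `((1 - α)v - αu) / (v + u(1 - v))`. The denominator of that
primitive is `1` at both `τ = 0` and `τ = t`, so the increment over `[0, t]` is
`1 - αe^{-λ₁t} - (1 - α)e^{-λ₂t}`.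
-/

noncomputable def pDensity (α l1 l2 c1 c2 t x : ℝ) : ℝ :=
  let τ := (c2 * t + x) / (c1 + c2)
  Real.exp (-l1 * τ) * Real.exp (-l2 * (t - τ)) *
      (l1 + l2 - α * l2 * Real.exp (-l1 * τ) - (1 - α) * l1 * Real.exp (-l2 * (t - τ))) /
    ((c1 + c2) * (Real.exp (-l2 * (t - τ)) +
      Real.exp (-l1 * τ) * (1 - Real.exp (-l2 * (t - τ)))) ^ 2)

open Real Set

namespace DampedTelegraph

noncomputable def occupationDensity (α l1 l2 u v : ℝ) : ℝ :=
  u * v * (l1 + l2 - α * l2 * u - (1 - α) * l1 * v) / (v + u * (1 - v)) ^ 2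

noncomputable def occupationPrimitive (α u v : ℝ) : ℝ :=
  ((1 - α) * v - α * u) / (v + u * (1 - v))

lemma add_mul_one_sub_pos {u v : ℝ} (hu : 0 < u) (hv : 0 < v) (hv1 : v ≤ 1) :
    0 < v + u * (1 - v) :=
  add_pos_of_pos_of_nonneg hv (mul_nonneg hu.le (sub_nonneg.2 hv1))

lemma occupationDensity_pos {α l1 l2 u v : ℝ} (hα : α ∈ Icc (0 : ℝ) 1)
    (hl1 : 0 < l1) (hl2 : 0 < l2) (hu : 0 < u) (hu1 : u ≤ 1) (hv : 0 < v) (hv1 : v ≤ 1) :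
    0 < occupationDensity α l1 l2 u v := by
  obtain ⟨hα0, hα1⟩ := hα
  have hnum : 0 < l1 + l2 - α * l2 * u - (1 - α) * l1 * v := by
    calc 0 < α * l1 + (1 - α) * l2 := by
          rcases hα0.eq_or_lt with rfl | hα0
          · simpa using hl2
          · exact add_pos_of_pos_of_nonneg (mul_pos hα0 hl1) (by nlinarith)
      _ ≤ _ := by nlinarith [mul_nonneg (mul_nonneg hα0 hl2.le) (sub_nonneg.2 hu1),
          mul_nonneg (mul_nonneg (sub_nonneg.2 hα1) hl1.le) (sub_nonneg.2 hv1)]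
  exact div_pos (mul_pos (mul_pos hu hv) hnum) (pow_pos (add_mul_one_sub_pos hu hv hv1) 2)

lemma hasDerivAt_occupationPrimitive {α l1 l2 τ : ℝ} {u v : ℝ → ℝ}
    (hu : HasDerivAt u (-l1 * u τ) τ) (hv : HasDerivAt v (l2 * v τ) τ)
    (hD : v τ + u τ * (1 - v τ) ≠ 0) :
    HasDerivAt (fun s => occupationPrimitive α (u s) (v s))
      (occupationDensity α l1 l2 (u τ) (v τ)) τ := by
  refine (((hv.const_mul (1 - α)).sub (hu.const_mul α)).div
    (hv.add (hu.mul (hv.const_sub 1))) hD).congr_deriv ?_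
  simp only [occupationDensity, Pi.add_apply, Pi.mul_apply, Pi.sub_apply]
  field_simp
  ring

lemma exp_neg_mul_le_one {l s : ℝ} (hl : 0 ≤ l) (hs : 0 ≤ s) : exp (-l * s) ≤ 1 :=
  exp_le_one_iff.2 (by nlinarith)

lemma integral_occupationDensity (α l1 : ℝ) {l2 t : ℝ} (hl2 : 0 ≤ l2) (ht : 0 ≤ t) :
    ∫ τ in (0 : ℝ)..t, occupationDensity α l1 l2 (exp (-l1 * τ)) (exp (-l2 * (t - τ))) =
      1 - α * exp (-l1 * t) - (1 - α) * exp (-l2 * t) := by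
  have hD : ∀ τ ∈ uIcc 0 t,
      0 < exp (-l2 * (t - τ)) + exp (-l1 * τ) * (1 - exp (-l2 * (t - τ))) := by
    intro τ hτ
    rw [uIcc_of_le ht] at hτ
    exact add_mul_one_sub_pos (exp_pos _) (exp_pos _)
      (exp_neg_mul_le_one hl2 (sub_nonneg.2 hτ.2))
  have hderiv : ∀ τ ∈ uIcc 0 t, HasDerivAt
      (fun s => occupationPrimitive α (exp (-l1 * s)) (exp (-l2 * (t - s))))
      (occupationDensity α l1 l2 (exp (-l1 * τ)) (exp (-l2 * (t - τ)))) τ := by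
    intro τ hτ
    refine hasDerivAt_occupationPrimitive ?_ ?_ (hD τ hτ).ne'
    · exact (((hasDerivAt_id' τ).const_mul (-l1)).exp).congr_deriv (by ring)
    · exact ((((hasDerivAt_id' τ).const_sub t).const_mul (-l2)).exp).congr_deriv (by ring)
  have hcont : ContinuousOn
      (fun τ => occupationDensity α l1 l2 (exp (-l1 * τ)) (exp (-l2 * (t - τ)))) (uIcc 0 t) :=
    ContinuousOn.div (by fun_prop) (by fun_prop) fun τ hτ => pow_ne_zero 2 (hD τ hτ).ne'
  rw [intervalIntegral.integral_eq_sub_of_hasDerivAt hderiv hcont.intervalIntegrable]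
  simp only [occupationPrimitive, sub_self, mul_zero, exp_zero, mul_one, neg_mul, add_zero, div_one,
    sub_zero, one_mul, add_sub_cancel]
  ring

lemma integral_comp_occupationTime (f : ℝ → ℝ) {c1 c2 : ℝ} (hc : c1 + c2 ≠ 0) (t : ℝ) :
    ∫ x in (-c2 * t)..(c1 * t), f ((c2 * t + x) / (c1 + c2)) / (c1 + c2) =
      ∫ τ in (0 : ℝ)..t, f τ := by
  simp_rw [intervalIntegral.integral_div, add_div, intervalIntegral.integral_comp_add_div f hc]
  have h0 : c2 * t / (c1 + c2) + -c2 * t / (c1 + c2) = 0 := by ring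
  have ht : c2 * t / (c1 + c2) + c1 * t / (c1 + c2) = t := by field_simp; ring
  rw [h0, ht, smul_eq_mul, mul_div_cancel_left₀ _ hc]

lemma occupationTime_mem_Icc {c1 c2 t x : ℝ} (hc : 0 < c1 + c2)
    (hx : x ∈ Icc (-c2 * t) (c1 * t)) :
    (c2 * t + x) / (c1 + c2) ∈ Icc 0 t := by
  constructor
  · exact div_nonneg (by linarith [hx.1]) hc.le
  · rw [div_le_iff₀ hc]; linarith [hx.2]

lemma pDensity_eq (α l1 l2 c1 c2 t x : ℝ) :
    pDensity α l1 l2 c1 c2 t x =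
      occupationDensity α l1 l2 (exp (-l1 * ((c2 * t + x) / (c1 + c2))))
        (exp (-l2 * (t - (c2 * t + x) / (c1 + c2)))) / (c1 + c2) := by
  rw [pDensity, occupationDensity, div_div, mul_comm (c1 + c2)]

end DampedTelegraph

open DampedTelegraph

theorem damped_telegraph_distribution
    (α l1 l2 c1 c2 t : ℝ) (hα : α ∈ Set.Icc (0 : ℝ) 1)
    (hl1 : 0 < l1) (hl2 : 0 < l2) (hc1 : 0 < c1) (hc2 : 0 < c2) (ht : 0 < t) :
    (∀ x ∈ Set.Ioo (-c2 * t) (c1 * t), 0 < pDensity α l1 l2 c1 c2 t x) ∧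
      α * Real.exp (-l1 * t) + (1 - α) * Real.exp (-l2 * t) +
        ∫ x in (-c2 * t)..(c1 * t), pDensity α l1 l2 c1 c2 t x = 1 := by
  have hc : 0 < c1 + c2 := add_pos hc1 hc2
  refine ⟨fun x hx => ?_, ?_⟩
  · obtain ⟨hτ0, hτt⟩ := occupationTime_mem_Icc hc (Ioo_subset_Icc_self hx)
    rw [pDensity_eq]
    exact div_pos (occupationDensity_pos hα hl1 hl2 (exp_pos _) (exp_neg_mul_le_one hl1.le hτ0)
      (exp_pos _) (exp_neg_mul_le_one hl2.le (sub_nonneg.2 hτt))) hc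
  · simp_rw [pDensity_eq]
    rw [integral_comp_occupationTime
      (fun τ => occupationDensity α l1 l2 (exp (-l1 * τ)) (exp (-l2 * (t - τ)))) hc.ne',
      integral_occupationDensity α l1 hl2.le ht.le]
    ring
end
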